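/- arXiv:1608.06539 — 5 statements merged into one kernel-verified Lean document; each statement's English description precedes it below -/
import Mathlib

section
/- Let G act on V = k^d and on k(X)^d via the same representation, where X = (X₁,…,X_d) is a vector of indeterminates. Then Sym(G,V) = Sym(G,X), i.e., the generic symmetry group equals the orbit symmetry group of the generic vector X over the function field. -/
/-!
A permutation `π` is an orbit symmetry of a spanning family `c : G → F^d` (some invertible `A`
sends `c g` to `c (π g)` for all `g`) iff for every `d`-tuple `t` of group elements the Cramer
identity `colMatrix c (π ∘ t) * adj (colMatrix c t) * c g = det (colMatrix c t) • c (π g)` holds: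
applying `A` to the columns gives it, and conversely it determines `A` once `det ≠ 0`.
These identities are polynomial in `c`. For the generic orbit `ρ(g) X` they therefore pass to
every specialisation `X ↦ v`; conversely, if they hold at every cyclic vector `v`, then the
identity multiplied by a determinant that is nonzero at one cyclic vector vanishes on all of
`k^d`, hence in `k[X]` because `k` is infinite, and the determinant can be cancelled.
-/

open Matrix

/-- The vector of indeterminates `X = (X₁,…,X_d)` in `k(X)^d`. -/
noncomputable def Xvec (k : Type*) [Field k] (d : ℕ) :
    Fin d → FractionRing (MvPolynomial (Fin d) k) :=
  fun i => algebraMap (MvPolynomial (Fin d) k) _ (MvPolynomial.X i)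

/-- Embedding of scalars `k → k(X)`. -/
noncomputable def toFunField (k : Type*) [Field k] (d : ℕ) :
    k → FractionRing (MvPolynomial (Fin d) k) :=
  fun a => algebraMap (MvPolynomial (Fin d) k) _ (MvPolynomial.C a)

section CommRing

variable {G S S' : Type*} [CommRing S] [CommRing S'] {d : ℕ}

def colMatrix (c : G → Fin d → S) (t : Fin d → G) : Matrix (Fin d) (Fin d) S :=
  of fun i j => c (t j) i

def IsOrbitSymmetry (c : G → Fin d → S) (π : Equiv.Perm G) : Prop :=
  ∃ A : GL (Fin d) S, ∀ g, A.val *ᵥ c g = c (π g)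

def cramerDefect (c : G → Fin d → S) (π : Equiv.Perm G) (t : Fin d → G) (g : G) : Fin d → S :=
  (colMatrix c (π ∘ t) * adjugate (colMatrix c t)) *ᵥ c g - (colMatrix c t).det • c (π g)

def CramerRelations (c : G → Fin d → S) (π : Equiv.Perm G) : Prop :=
  ∀ t g, cramerDefect c π t g = 0

variable {c : G → Fin d → S} {π : Equiv.Perm G}

lemma mul_colMatrix_of_mulVec_eq {A : Matrix (Fin d) (Fin d) S}
    (hA : ∀ g, A *ᵥ c g = c (π g)) (t : Fin d → G) :
    A * colMatrix c t = colMatrix c (π ∘ t) := by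
  ext i j
  simpa [colMatrix, mul_apply, mulVec, dotProduct] using congrFun (hA (t j)) i

lemma cramerRelations_of_mulVec_eq {A : Matrix (Fin d) (Fin d) S}
    (hA : ∀ g, A *ᵥ c g = c (π g)) : CramerRelations c π := by
  intro t g
  rw [cramerDefect, ← mul_colMatrix_of_mulVec_eq hA, Matrix.mul_assoc, mul_adjugate,
    Matrix.mul_smul, Matrix.mul_one, smul_mulVec, hA, sub_self]

lemma IsOrbitSymmetry.cramerRelations (h : IsOrbitSymmetry c π) : CramerRelations c π :=
  let ⟨_, hA⟩ := h
  cramerRelations_of_mulVec_eq hA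

lemma map_det_colMatrix (ψ : S →+* S') (t : Fin d → G) :
    ψ (colMatrix c t).det = (colMatrix (fun g => ψ ∘ c g) t).det :=
  RingHom.map_det ψ _

lemma map_comp_cramerDefect (ψ : S →+* S') (t : Fin d → G) (g : G) :
    ψ ∘ cramerDefect c π t g = cramerDefect (fun g => ψ ∘ c g) π t g := by
  have hadj := RingHom.map_adjugate ψ (colMatrix c t)
  simp only [RingHom.mapMatrix_apply] at hadj
  ext i
  simp only [cramerDefect, Function.comp_apply, Pi.sub_apply, Pi.smul_apply, smul_eq_mul,
    map_sub, _root_.map_mul, RingHom.map_mulVec, Matrix.map_mul, hadj, map_det_colMatrix]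
  rfl

lemma CramerRelations.map (h : CramerRelations c π) (ψ : S →+* S') :
    CramerRelations (fun g => ψ ∘ c g) π := by
  intro t g
  rw [← map_comp_cramerDefect, h t g]
  ext
  exact map_zero ψ

lemma cramerRelations_map_iff {ψ : S →+* S'} (hψ : Function.Injective ψ) :
    CramerRelations (fun g => ψ ∘ c g) π ↔ CramerRelations c π := by
  refine ⟨fun h t g => ?_, fun h => h.map ψ⟩
  ext i
  rw [Pi.zero_apply, ← map_eq_zero_iff ψ hψ, ← Function.comp_apply (f := ψ),
    map_comp_cramerDefect, h t g, Pi.zero_apply]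

end CommRing

section Field

variable {G F : Type*} [Field F] {d : ℕ} {c : G → Fin d → F} {π : Equiv.Perm G}

lemma span_range_eq_top_iff_exists_det_colMatrix_ne_zero :
    Submodule.span F (Set.range c) = ⊤ ↔ ∃ t : Fin d → G, (colMatrix c t).det ≠ 0 := by
  constructor
  · intro hc
    obtain ⟨κ, a, -, hspan, hli⟩ := exists_linearIndependent' F c
    let B := Module.Basis.mk hli (by rw [hspan, hc])
    have : Fintype κ := FiniteDimensional.fintypeBasisIndex B
    have hcard : Fintype.card κ = d := by
      simpa using (Module.finrank_eq_card_basis B).symm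
    let e : Fin d ≃ κ := (Fintype.equivFinOfCardEq hcard).symm
    refine ⟨a ∘ e, (isUnit_iff_isUnit_det _).1 ?_ |>.ne_zero⟩
    exact linearIndependent_cols_iff_isUnit.1 (hli.comp e e.injective)
  · rintro ⟨t, ht⟩
    have hli : LinearIndependent F (c ∘ t) :=
      linearIndependent_cols_iff_isUnit.2 ((isUnit_iff_isUnit_det _).2 (Ne.isUnit ht))
    refine eq_top_iff.2 ((hli.span_eq_top_of_card_eq_finrank' ?_).ge.trans ?_)
    · simp
    · exact Submodule.span_mono (Set.range_comp_subset_range t c)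

lemma isOrbitSymmetry_of_cramerDefect_eq_zero {t : Fin d → G} (ht : (colMatrix c t).det ≠ 0)
    (h : ∀ g, cramerDefect c π t g = 0) : IsOrbitSymmetry c π := by
  set A := (colMatrix c t).det⁻¹ • (colMatrix c (π ∘ t) * adjugate (colMatrix c t))
  have hA : ∀ g, A *ᵥ c g = c (π g) := by
    intro g
    rw [smul_mulVec, sub_eq_zero.1 (h g), smul_smul, inv_mul_cancel₀ ht, one_smul]
  have hsurj : Function.Surjective A.mulVecLin := by
    rw [← LinearMap.range_eq_top, eq_top_iff,
      ← span_range_eq_top_iff_exists_det_colMatrix_ne_zero.2 ⟨t, ht⟩, Submodule.span_le]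
    rintro _ ⟨g, rfl⟩
    exact ⟨c (π.symm g), by simpa using hA (π.symm g)⟩
  have hunit : IsUnit A := mulVec_surjective_iff_isUnit.1 hsurj
  exact ⟨hunit.unit, hA⟩

lemma isOrbitSymmetry_iff_cramerRelations (hc : Submodule.span F (Set.range c) = ⊤) :
    IsOrbitSymmetry c π ↔ CramerRelations c π := by
  refine ⟨IsOrbitSymmetry.cramerRelations, fun h => ?_⟩
  obtain ⟨t, ht⟩ := span_range_eq_top_iff_exists_det_colMatrix_ne_zero.1 hc
  exact isOrbitSymmetry_of_cramerDefect_eq_zero ht (h t)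

end Field

section Generic

open MvPolynomial

variable {G k : Type*} [Field k] {d : ℕ} (M : G → Matrix (Fin d) (Fin d) k)

noncomputable def genericOrbit : G → Fin d → MvPolynomial (Fin d) k :=
  fun g => (M g).map C *ᵥ X

lemma eval_comp_genericOrbit (v : Fin d → k) :
    (fun g => ⇑(eval v) ∘ genericOrbit M g) = fun g => M g *ᵥ v := by
  have hC : ⇑(eval v) ∘ (C : k → MvPolynomial (Fin d) k) = id := funext fun a => eval_C a
  have hX : ⇑(eval v) ∘ (X : Fin d → MvPolynomial (Fin d) k) = v := funext fun j => eval_X j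
  ext g i
  rw [Function.comp_apply, genericOrbit, RingHom.map_mulVec, Matrix.map_map, hC, hX, map_id]

lemma algebraMap_comp_genericOrbit :
    (fun g => ⇑(algebraMap (MvPolynomial (Fin d) k) (FractionRing (MvPolynomial (Fin d) k))) ∘
      genericOrbit M g) = fun g => (M g).map (toFunField k d) *ᵥ Xvec k d := by
  ext g i
  rw [Function.comp_apply, genericOrbit, RingHom.map_mulVec, Matrix.map_map]
  rfl

lemma det_colMatrix_genericOrbit_ne_zero {v : Fin d → k} {t : Fin d → G}
    (h : (colMatrix (fun g => M g *ᵥ v) t).det ≠ 0) :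
    (colMatrix (genericOrbit M) t).det ≠ 0 := by
  rw [← eval_comp_genericOrbit M v, ← map_det_colMatrix] at h
  exact fun h0 => h (by rw [h0, map_zero])

lemma cramerRelations_genericOrbit [Infinite k] {π : Equiv.Perm G} {t₀ : Fin d → G}
    (ht₀ : (colMatrix (genericOrbit M) t₀).det ≠ 0)
    (h : ∀ v, Submodule.span k (Set.range fun g => M g *ᵥ v) = ⊤ →
      CramerRelations (fun g => M g *ᵥ v) π) :
    CramerRelations (genericOrbit M) π := by
  intro t g
  funext i
  have hprod : (colMatrix (genericOrbit M) t₀).det * cramerDefect (genericOrbit M) π t g i = 0 :=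
    MvPolynomial.funext fun w => by
      rw [_root_.map_mul, map_zero, map_det_colMatrix, ← Function.comp_apply (f := eval w),
        map_comp_cramerDefect, eval_comp_genericOrbit]
      by_cases hw : (colMatrix (fun g => M g *ᵥ w) t₀).det = 0
      · rw [hw, zero_mul]
      · have hspan := span_range_eq_top_iff_exists_det_colMatrix_ne_zero.2 ⟨t₀, hw⟩
        rw [h w hspan t g, Pi.zero_apply, mul_zero]
  exact (mul_eq_zero.1 hprod).resolve_left ht₀

end Generic

theorem generic_sym_iff_orbit_sym_of_indeterminates_general
    {k G : Type*} [Field k] [Infinite k] [Group G] (d : ℕ)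
    (ρ : G →* GL (Fin d) k)
    (hcyc : ∃ v : Fin d → k,
      Submodule.span k (Set.range fun g : G => (ρ g).val.mulVec v) = ⊤)
    (π : Equiv.Perm G) :
    (∀ v : Fin d → k,
        Submodule.span k (Set.range fun g : G => (ρ g).val.mulVec v) = ⊤ →
        ∃ A : GL (Fin d) k,
          ∀ g : G, A.val.mulVec ((ρ g).val.mulVec v) = (ρ (π g)).val.mulVec v) ↔
    ∃ B : GL (Fin d) (FractionRing (MvPolynomial (Fin d) k)),
      ∀ g : G,
        B.val.mulVec (((ρ g).val.map (toFunField k d)).mulVec (Xvec k d)) =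
          ((ρ (π g)).val.map (toFunField k d)).mulVec (Xvec k d) := by
  obtain ⟨v₀, hv₀⟩ := hcyc
  obtain ⟨t₀, ht₀⟩ := span_range_eq_top_iff_exists_det_colMatrix_ne_zero.1 hv₀
  have hdet := det_colMatrix_genericOrbit_ne_zero (fun g => (ρ g).val) ht₀
  have hinj := IsFractionRing.injective (MvPolynomial (Fin d) k)
    (FractionRing (MvPolynomial (Fin d) k))
  have hspanX : Submodule.span (FractionRing (MvPolynomial (Fin d) k))
      (Set.range fun g => ((ρ g).val.map (toFunField k d)) *ᵥ Xvec k d) = ⊤ := by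
    refine span_range_eq_top_iff_exists_det_colMatrix_ne_zero.2 ⟨t₀, ?_⟩
    rw [← algebraMap_comp_genericOrbit, ← map_det_colMatrix]
    exact (map_ne_zero_iff _ hinj).2 hdet
  change (∀ v, _ → IsOrbitSymmetry _ π) ↔ IsOrbitSymmetry _ π
  rw [isOrbitSymmetry_iff_cramerRelations hspanX, ← algebraMap_comp_genericOrbit,
    cramerRelations_map_iff hinj]
  constructor
  · intro h
    exact cramerRelations_genericOrbit _ hdet fun v hv =>
      (isOrbitSymmetry_iff_cramerRelations hv).1 (h v hv)
  · intro h v hv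
    rw [isOrbitSymmetry_iff_cramerRelations hv, ← eval_comp_genericOrbit]
    exact h.map _

/-- `Sym(G,V) = Sym(G,X)`: a permutation is a generic symmetry for the
representation on `k^d` iff it is an orbit symmetry of the vector of indeterminates
`X` over the function field `k(X)`. -/
theorem generic_sym_iff_orbit_sym_of_indeterminates
    {k G : Type*} [Field k] [Infinite k] [Group G] [Finite G] (d : ℕ)
    (ρ : G →* GL (Fin d) k)
    (hcyc : ∃ v : Fin d → k,
      Submodule.span k (Set.range fun g : G => (ρ g).val.mulVec v) = ⊤)
    (π : Equiv.Perm G) :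
    (∀ v : Fin d → k,
        Submodule.span k (Set.range fun g : G => (ρ g).val.mulVec v) = ⊤ →
        ∃ A : GL (Fin d) k,
          ∀ g : G, A.val.mulVec ((ρ g).val.mulVec v) = (ρ (π g)).val.mulVec v) ↔
    ∃ B : GL (Fin d) (FractionRing (MvPolynomial (Fin d) k)),
      ∀ g : G,
        B.val.mulVec (((ρ g).val.map (toFunField k d)).mulVec (Xvec k d)) =
          ((ρ (π g)).val.map (toFunField k d)).mulVec (Xvec k d) :=
  generic_sym_iff_orbit_sym_of_indeterminates_general d ρ hcyc π
end

section
/- The generic symmetry group is invariant under scalar extension: if E is an extension field of the infinite field k and V is a cyclic kG-module, then Sym(G,V) = Sym(G, V ⊗_k E). -/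
/-!
A permutation `π` is realized at a generator `w` by at most one matrix: if `X` has columns
`ρ(tⱼ) w` forming a basis and `Y` has columns `ρ(π tⱼ) w`, then `A = Y X⁻¹`. Clearing the
denominator `det X`, realizability at `w` becomes the vanishing of finitely many polynomial
expressions in `w` with coefficients in `k`. Descending from `E` to `k` is then injectivity of
`k → E`. Ascending, these expressions times `det X` vanish at every point of `kᵈ`, hence as
polynomials because `k` is infinite, hence at every `w ∈ Eᵈ` with `det X(w) ≠ 0`.
-/

open Matrix

section OrbitMatrix

variable {G n : Type*} [Fintype n]

def orbitMatrix {T : Type*} [CommRing T] (N : G → Matrix n n T) (u : n → T) (t : n → G) :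
    Matrix n n T :=
  Matrix.of fun i j => (N (t j) *ᵥ u) i

theorem orbitMatrix_map {T T' : Type*} [CommRing T] [CommRing T'] (f : T →+* T')
    (N : G → Matrix n n T) (u : n → T) (t : n → G) :
    (orbitMatrix N u t).map f = orbitMatrix (fun g => (N g).map f) (f ∘ u) t := by
  ext i j
  exact f.map_mulVec _ _ i

variable [DecidableEq n]

/-- For `A = Y X⁻¹` with `X = orbitMatrix N u t` and `Y = orbitMatrix N u (π ∘ t)`, the identity
`A (N g u) = N (π g) u` multiplied by `det X`. -/
def symDefect {T : Type*} [CommRing T] (N : G → Matrix n n T) (π : Equiv.Perm G) (u : n → T)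
    (t : n → G) (g : G) : n → T :=
  orbitMatrix N u (π ∘ t) *ᵥ ((orbitMatrix N u t).adjugate *ᵥ (N g *ᵥ u)) -
    (orbitMatrix N u t).det • (N (π g) *ᵥ u)

theorem symDefect_map {T T' : Type*} [CommRing T] [CommRing T'] (f : T →+* T')
    (N : G → Matrix n n T) (π : Equiv.Perm G) (u : n → T) (t : n → G) (g : G) :
    f ∘ symDefect N π u t g = symDefect (fun g => (N g).map f) π (f ∘ u) t g := by
  have comp_mulVec (M : Matrix n n T) (v : n → T) : f ∘ (M *ᵥ v) = M.map f *ᵥ (f ∘ v) :=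
    funext (f.map_mulVec M v)
  have map_adjugate (M : Matrix n n T) : M.adjugate.map f = (M.map f).adjugate :=
    f.map_adjugate M
  ext i
  rw [Function.comp_apply, symDefect, symDefect, Pi.sub_apply, Pi.sub_apply, map_sub,
    Pi.smul_apply, Pi.smul_apply, smul_eq_mul, smul_eq_mul, map_mul, f.map_det,
    RingHom.mapMatrix_apply, f.map_mulVec, f.map_mulVec (N (π g)), comp_mulVec, map_adjugate,
    comp_mulVec, orbitMatrix_map, orbitMatrix_map]

theorem symDefect_map_eq_zero_iff {T T' : Type*} [CommRing T] [CommRing T'] {f : T →+* T'}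
    (hf : Function.Injective f) (N : G → Matrix n n T) (π : Equiv.Perm G) (u : n → T)
    (t : n → G) (g : G) :
    symDefect (fun g => (N g).map f) π (f ∘ u) t g = 0 ↔ symDefect N π u t g = 0 := by
  have comp_zero : f ∘ (0 : n → T) = 0 := funext fun _ => map_zero f
  rw [← symDefect_map, ← comp_zero, hf.comp_left.eq_iff]

end OrbitMatrix

section Field

variable {G n F : Type*} [Fintype n] [DecidableEq n] [Field F]

theorem span_orbit_eq_top_of_det_ne_zero {N : G → Matrix n n F} {v : n → F} {t : n → G}
    (ht : (orbitMatrix N v t).det ≠ 0) :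
    Submodule.span F (Set.range fun g => N g *ᵥ v) = ⊤ := by
  have hcols : Submodule.span F (Set.range (orbitMatrix N v t).col) = ⊤ := by
    rw [← range_mulVecLin, LinearMap.range_eq_top]
    exact mulVec_surjective_iff_isUnit.mpr ((isUnit_iff_isUnit_det _).mpr ht.isUnit)
  refine top_unique (hcols ▸ Submodule.span_mono ?_)
  rintro _ ⟨j, rfl⟩
  exact ⟨t j, rfl⟩

theorem exists_det_orbitMatrix_ne_zero {N : G → Matrix n n F} {v : n → F}
    (hv : Submodule.span F (Set.range fun g => N g *ᵥ v) = ⊤) :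
    ∃ t : n → G, (orbitMatrix N v t).det ≠ 0 := by
  obtain ⟨κ, a, -, hspan, hli⟩ := exists_linearIndependent' F fun g => N g *ᵥ v
  let e : n ≃ κ := (Pi.basisFun F n).indexEquiv (.mk hli (by rw [hspan, hv]))
  refine ⟨a ∘ e, ?_⟩
  rw [← isUnit_iff_ne_zero, ← isUnit_iff_isUnit_det, ← linearIndependent_cols_iff_isUnit]
  exact hli.comp e e.injective

theorem exists_GL_iff_symDefect_eq_zero (N : G → Matrix n n F) (π : Equiv.Perm G) (v : n → F)
    {t : n → G} (ht : (orbitMatrix N v t).det ≠ 0) :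
    (∃ A : GL n F, ∀ g, A.val *ᵥ (N g *ᵥ v) = N (π g) *ᵥ v) ↔
      ∀ g, symDefect N π v t g = 0 := by
  set X := orbitMatrix N v t
  constructor
  · rintro ⟨A, hA⟩ g
    have hY : orbitMatrix N v (π ∘ t) = A.val * X := by
      ext i j
      rw [orbitMatrix, of_apply, Function.comp_apply, ← hA]
      rfl
    rw [symDefect, hY, mulVec_mulVec, Matrix.mul_assoc, mul_adjugate, Matrix.mul_smul,
      Matrix.mul_one, smul_mulVec, hA, sub_self]
  · intro h
    set A := X.det⁻¹ • (orbitMatrix N v (π ∘ t) * X.adjugate)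
    have hA : ∀ g, A *ᵥ (N g *ᵥ v) = N (π g) *ᵥ v := fun g => by
      rw [smul_mulVec, ← mulVec_mulVec, sub_eq_zero.mp (h g), smul_smul, inv_mul_cancel₀ ht,
        one_smul]
    have hsurj : Submodule.span F (Set.range fun g => N g *ᵥ v) ≤ LinearMap.range A.mulVecLin :=
      Submodule.span_le.mpr <| by
        rintro _ ⟨g, rfl⟩
        exact ⟨N (π.symm g) *ᵥ v, by rw [mulVecLin_apply, hA, π.apply_symm_apply]⟩
    rw [span_orbit_eq_top_of_det_ne_zero ht, top_le_iff, LinearMap.range_eq_top] at hsurj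
    exact ⟨(mulVec_surjective_iff_isUnit.mp hsurj).unit, hA⟩

end Field

section Generic

open MvPolynomial

variable {G n k : Type*} [Fintype n] [DecidableEq n] [Field k]

theorem det_orbitMatrix_aeval {T : Type*} [CommRing T] [Algebra k T] (M : G → Matrix n n k)
    (u : n → T) (t : n → G) :
    aeval u (orbitMatrix (fun g => (M g).map (algebraMap k (MvPolynomial n k))) X t).det =
      (orbitMatrix (fun g => (M g).map (algebraMap k T)) u t).det := by
  rw [← AlgHom.coe_toRingHom, RingHom.map_det, RingHom.mapMatrix_apply, orbitMatrix_map]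
  congr <;> ext <;> simp

theorem symDefect_aeval {T : Type*} [CommRing T] [Algebra k T] (M : G → Matrix n n k)
    (π : Equiv.Perm G) (u : n → T) (t : n → G) (g : G) :
    aeval u ∘ symDefect (fun g => (M g).map (algebraMap k (MvPolynomial n k))) π X t g =
      symDefect (fun g => (M g).map (algebraMap k T)) π u t g := by
  rw [← AlgHom.coe_toRingHom, symDefect_map]
  congr <;> ext <;> simp

theorem symDefect_generic_eq_zero [Infinite k] (M : G → Matrix n n k) (π : Equiv.Perm G)
    (hM : ∀ v : n → k, Submodule.span k (Set.range fun g => M g *ᵥ v) = ⊤ →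
      ∃ A : GL n k, ∀ g, A.val *ᵥ (M g *ᵥ v) = M (π g) *ᵥ v)
    {t : n → G}
    (ht : (orbitMatrix (fun g => (M g).map (algebraMap k (MvPolynomial n k))) X t).det ≠ 0)
    (g : G) : symDefect (fun g => (M g).map (algebraMap k (MvPolynomial n k))) π X t g = 0 := by
  funext i
  -- the factor `det X` makes the identity hold also at points where `X` is singular
  refine (mul_eq_zero.mp (MvPolynomial.funext fun v => ?_)).resolve_right ht
  change aeval v (_ * _) = aeval v 0
  rw [map_mul, map_zero, det_orbitMatrix_aeval,
    ← Function.comp_apply (f := aeval v), symDefect_aeval]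
  simp only [Algebra.algebraMap_self, RingHom.coe_id, map_id]
  by_cases hv : (orbitMatrix M v t).det = 0
  · rw [hv, mul_zero]
  · rw [(exists_GL_iff_symDefect_eq_zero M π v hv).mp
      (hM v (span_orbit_eq_top_of_det_ne_zero hv)) g, Pi.zero_apply, zero_mul]

end Generic

theorem generic_sym_scalar_extension_general
    {k G : Type*} [Field k] [Infinite k] [Group G]
    (E : Type*) [Field E] [Algebra k E] (d : ℕ)
    (ρ : G →* GL (Fin d) k)
    (π : Equiv.Perm G) :
    (∀ v : Fin d → k,
        Submodule.span k (Set.range fun g : G => (ρ g).val.mulVec v) = ⊤ →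
        ∃ A : GL (Fin d) k,
          ∀ g : G, A.val.mulVec ((ρ g).val.mulVec v) = (ρ (π g)).val.mulVec v) ↔
    (∀ w : Fin d → E,
        Submodule.span E
          (Set.range fun g : G => ((ρ g).val.map (algebraMap k E)).mulVec w) = ⊤ →
        ∃ B : GL (Fin d) E,
          ∀ g : G, B.val.mulVec (((ρ g).val.map (algebraMap k E)).mulVec w) =
            ((ρ (π g)).val.map (algebraMap k E)).mulVec w) := by
  constructor
  · intro hk w hw
    obtain ⟨t, ht⟩ := exists_det_orbitMatrix_ne_zero hw
    have hgeneric : (orbitMatrix (fun g => (ρ g).val.map (algebraMap k (MvPolynomial (Fin d) k)))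
        MvPolynomial.X t).det ≠ 0 := fun h => ht (by rw [← det_orbitMatrix_aeval, h, map_zero])
    refine (exists_GL_iff_symDefect_eq_zero _ π w ht).mpr fun g => ?_
    rw [← symDefect_aeval, symDefect_generic_eq_zero _ π hk hgeneric g]
    exact funext fun _ => map_zero _
  · intro hE v hv
    obtain ⟨t, ht⟩ := exists_det_orbitMatrix_ne_zero hv
    have htE : (orbitMatrix (fun g => (ρ g).val.map (algebraMap k E))
        (algebraMap k E ∘ v) t).det ≠ 0 := by
      rw [← orbitMatrix_map, ← RingHom.mapMatrix_apply, ← RingHom.map_det]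
      exact (map_ne_zero _).mpr ht
    have hB := (exists_GL_iff_symDefect_eq_zero _ π _ htE).mp
      (hE _ (span_orbit_eq_top_of_det_ne_zero htE))
    exact (exists_GL_iff_symDefect_eq_zero _ π v ht).mpr fun g =>
      (symDefect_map_eq_zero_iff (algebraMap k E).injective _ π v t g).mp (hB g)

/-- The generic symmetry group is invariant under scalar extension:
for an extension field `E/k` and a cyclic module `k^d`,
`Sym(G,V) = Sym(G, V ⊗_k E)`. -/
theorem generic_sym_scalar_extension
    {k G : Type*} [Field k] [Infinite k] [Group G] [Finite G]
    (E : Type*) [Field E] [Algebra k E] (d : ℕ)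
    (ρ : G →* GL (Fin d) k)
    (hcyc : ∃ v : Fin d → k,
      Submodule.span k (Set.range fun g : G => (ρ g).val.mulVec v) = ⊤)
    (π : Equiv.Perm G) :
    (∀ v : Fin d → k,
        Submodule.span k (Set.range fun g : G => (ρ g).val.mulVec v) = ⊤ →
        ∃ A : GL (Fin d) k,
          ∀ g : G, A.val.mulVec ((ρ g).val.mulVec v) = (ρ (π g)).val.mulVec v) ↔
    (∀ w : Fin d → E,
        Submodule.span E
          (Set.range fun g : G => ((ρ g).val.map (algebraMap k E)).mulVec w) = ⊤ →
        ∃ B : GL (Fin d) E,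
          ∀ g : G, B.val.mulVec (((ρ g).val.map (algebraMap k E)).mulVec w) =
            ((ρ (π g)).val.map (algebraMap k E)).mulVec w) :=
  generic_sym_scalar_extension_general E d ρ π
end

section
/- Let v ∈ Gen(V) with stabilizer H = G_v, and suppose the characteristic of k does not divide |H|. Then the evaluation map at v from GL(GX) to GL(Gv) is injective, where GL(GX) is the group of matrices over k(X) realizing generic symmetries on the orbit of the indeterminate vector X. -/
open Matrix

/-- `B` is the evaluation at `v` of the matrix `A` over `k(X)`: each entry of `A` can be
written `p/q` with `q(v) ≠ 0`, and the corresponding entry of `B` is `p(v)/q(v)`. -/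
def EvalAt {k : Type*} [Field k] {d : ℕ} (v : Fin d → k)
    (A : Matrix (Fin d) (Fin d) (FractionRing (MvPolynomial (Fin d) k)))
    (B : Matrix (Fin d) (Fin d) k) : Prop :=
  ∀ i j, ∃ p q : MvPolynomial (Fin d) k,
    MvPolynomial.eval v q ≠ 0 ∧
    algebraMap (MvPolynomial (Fin d) k) _ q * A i j =
      algebraMap (MvPolynomial (Fin d) k) _ p ∧
    MvPolynomial.eval v q * B i j = MvPolynomial.eval v p

/-!
Specializing `A (g X) = (π g) X` at `X = v` gives `B (g v) = (π g) v`. Hence `B` is invertible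
and `π` maps each fibre `{g | g v = w}`, a coset of the stabilizer `H`, bijectively onto the fibre
over `B w`, so `A` sends the coset sum `∑_{g v = w} g X` to the coset sum over `B w`, which only
depends on `B`; the same holds for `A'`. At `X = v` the coset sum over `w` becomes `|H| • w`;
as the orbit of `v` spans `k^d` and `|H| ≠ 0`, some `d` coset sums form a matrix whose determinant
does not vanish at `v`, so the coset sums span `k(X)^d` and `A = A'`.
-/

open MvPolynomial

section Specialization

variable {k : Type*} [Field k] {d : ℕ}

theorem map_toFunField_mulVec_Xvec (M : Matrix (Fin d) (Fin d) k) :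
    M.map (toFunField k d) *ᵥ Xvec k d =
      algebraMap (MvPolynomial (Fin d) k) _ ∘ (M.map C *ᵥ X) := by
  funext i
  rw [Function.comp_apply, RingHom.map_mulVec, Matrix.map_map]
  rfl

theorem eval_comp_map_C_mulVec_X (v : Fin d → k) (M : Matrix (Fin d) (Fin d) k) :
    eval v ∘ (M.map C *ᵥ X) = M *ᵥ v := by
  funext i
  rw [Function.comp_apply, RingHom.map_mulVec, Matrix.map_map]
  have hC : ⇑(eval v) ∘ ⇑C = (id : k → k) := funext fun a => eval_C a
  have hX : ⇑(eval v) ∘ X = v := funext fun j => eval_X j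
  rw [hC, hX, Matrix.map_id]

theorem EvalAt.exists_common_denom {v : Fin d → k}
    {M : Matrix (Fin d) (Fin d) (FractionRing (MvPolynomial (Fin d) k))}
    {B : Matrix (Fin d) (Fin d) k} (h : EvalAt v M B) :
    ∃ (q : MvPolynomial (Fin d) k) (P : Matrix (Fin d) (Fin d) (MvPolynomial (Fin d) k)),
      eval v q ≠ 0 ∧
        algebraMap _ (FractionRing (MvPolynomial (Fin d) k)) q • M = P.map (algebraMap _ _) ∧
        eval v q • B = P.map (eval v) := by
  classical
  choose p q hq hpM hpB using h
  refine ⟨∏ ij : Fin d × Fin d, q ij.1 ij.2,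
    Matrix.of fun i j => p i j * ∏ ij ∈ Finset.univ.erase (i, j), q ij.1 ij.2, ?_, ?_, ?_⟩
  · rw [map_prod]
    exact Finset.prod_ne_zero_iff.2 fun ij _ => hq ij.1 ij.2
  all_goals
    ext i j
    rw [← Finset.mul_prod_erase _ _ (Finset.mem_univ (i, j))]
    simp only [Matrix.smul_apply, smul_eq_mul, map_apply, of_apply, map_mul]
  · rw [← hpM]; ring
  · rw [← hpB]; ring

theorem EvalAt.mulVec_eval {v : Fin d → k}
    {M : Matrix (Fin d) (Fin d) (FractionRing (MvPolynomial (Fin d) k))}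
    {B : Matrix (Fin d) (Fin d) k} (h : EvalAt v M B) {r s : Fin d → MvPolynomial (Fin d) k}
    (hrs : M *ᵥ (algebraMap _ _ ∘ r) = algebraMap _ _ ∘ s) :
    B *ᵥ (eval v ∘ r) = eval v ∘ s := by
  set φ := algebraMap (MvPolynomial (Fin d) k) (FractionRing (MvPolynomial (Fin d) k))
  obtain ⟨q, P, hq, hPM, hPB⟩ := h.exists_common_denom
  have hP : P *ᵥ r = q • s := by
    apply (IsFractionRing.injective _ (FractionRing (MvPolynomial (Fin d) k))).comp_left
    calc φ ∘ (P *ᵥ r) = P.map φ *ᵥ (φ ∘ r) := funext (RingHom.map_mulVec φ P r)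
      _ = φ q • (M *ᵥ (φ ∘ r)) := by rw [← hPM, smul_mulVec]
      _ = φ ∘ (q • s) := by rw [hrs]; funext i; simp
  apply smul_right_injective _ hq
  calc eval v q • (B *ᵥ (eval v ∘ r)) = P.map (eval v) *ᵥ (eval v ∘ r) := by
        rw [← hPB, smul_mulVec]
    _ = eval v ∘ (P *ᵥ r) := (funext (RingHom.map_mulVec (eval v) P r)).symm
    _ = eval v q • (eval v ∘ s) := by rw [hP]; funext i; simp

theorem EvalAt.mulVec_of_mulVec_Xvec {v : Fin d → k}
    {M : Matrix (Fin d) (Fin d) (FractionRing (MvPolynomial (Fin d) k))}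
    {B N N' : Matrix (Fin d) (Fin d) k} (h : EvalAt v M B)
    (hM : M *ᵥ (N.map (toFunField k d) *ᵥ Xvec k d) = N'.map (toFunField k d) *ᵥ Xvec k d) :
    B *ᵥ (N *ᵥ v) = N' *ᵥ v := by
  rw [map_toFunField_mulVec_Xvec, map_toFunField_mulVec_Xvec] at hM
  simpa only [eval_comp_map_C_mulVec_X] using h.mulVec_eval hM

end Specialization

section LinearAlgebra

variable {n ι : Type*} [Fintype n]

theorem exists_linearIndependent_comp_of_span_eq_top {K : Type*} [Field K] {u : ι → n → K}
    (hu : Submodule.span K (Set.range u) = ⊤) : ∃ f : n → ι, LinearIndependent K (u ∘ f) := by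
  obtain ⟨κ, a, -, hspan, hli⟩ := exists_linearIndependent' K u
  let e := (Module.Basis.mk hli (by rw [hspan, hu])).indexEquiv (Pi.basisFun K n)
  exact ⟨a ∘ e.symm, hli.comp _ e.symm.injective⟩

variable [DecidableEq n]

theorem Matrix.isUnit_of_forall_mem_range_mulVec {K : Type*} [Field K] {B : Matrix n n K}
    {u : ι → n → K} (hu : Submodule.span K (Set.range u) = ⊤)
    (hB : ∀ i, u i ∈ Set.range B.mulVec) : IsUnit B := by
  rw [← mulVec_surjective_iff_isUnit, ← Matrix.coe_mulVecLin, ← LinearMap.range_eq_top,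
    eq_top_iff, ← hu, Submodule.span_le, Set.range_subset_iff]
  exact hB

variable {R k K : Type*} [CommRing R] [Field k] [Field K] [Algebra R K] [IsFractionRing R K]

theorem Matrix.isUnit_map_algebraMap_of_isUnit_map (ε : R →+* k) {P : Matrix n n R}
    (hP : IsUnit (P.map ε)) : IsUnit (P.map (algebraMap R K)) := by
  rw [isUnit_iff_isUnit_det, isUnit_iff_ne_zero] at hP ⊢
  rw [← RingHom.mapMatrix_apply, ← RingHom.map_det] at hP ⊢
  exact (map_ne_zero_iff _ (IsFractionRing.injective R K)).2 (ne_zero_of_map hP)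

theorem span_range_algebraMap_comp_eq_top (ε : R →+* k) {y : ι → n → R}
    (hy : Submodule.span k (Set.range fun i => ε ∘ y i) = ⊤) :
    Submodule.span K (Set.range fun i => algebraMap R K ∘ y i) = ⊤ := by
  obtain ⟨f, hf⟩ := exists_linearIndependent_comp_of_span_eq_top hy
  have hunit : IsUnit ((Matrix.of fun j => y (f j)).map (algebraMap R K)) :=
    isUnit_map_algebraMap_of_isUnit_map ε (linearIndependent_rows_iff_isUnit.1 hf)
  refine eq_top_mono (Submodule.span_mono (Set.range_comp_subset_range f _)) ?_
  exact (linearIndependent_rows_iff_isUnit.2 hunit).span_eq_top_of_card_eq_finrank'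
    (Module.finrank_fintype_fun_eq_card K).symm

end LinearAlgebra

theorem Finset.sum_filter_comp_of_semiconj {ι V M : Type*} [Fintype ι] [DecidableEq V]
    [AddCommMonoid M] {π : ι ≃ ι} {o : ι → V} {β : V → V} (hβ : Function.Injective β)
    (ho : Function.Semiconj o π β) (f : ι → M) (w : V) :
    ∑ i with o i = w, f (π i) = ∑ i with o i = β w, f i :=
  Finset.sum_equiv π (by simp [ho _, hβ.eq_iff]) fun _ _ => rfl

theorem RingHom.comp_finset_sum {ι I α β : Type*} [NonAssocSemiring α] [NonAssocSemiring β]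
    (f : α →+* β) (s : Finset ι) (x : ι → I → α) : f ∘ ∑ i ∈ s, x i = ∑ i ∈ s, f ∘ x i :=
  map_sum (f.compLeft I) x s

section CosetSum

variable {k G : Type*} [Field k] [Group G] [Fintype G] {d : ℕ}
  (ρ : G →* GL (Fin d) k) (v : Fin d → k)

open scoped Classical in
/-- For `w = g₀ v` this is the sum of `g X` over the coset `g₀ G_v` of the stabilizer. -/
noncomputable def cosetSum (w : Fin d → k) : Fin d → MvPolynomial (Fin d) k :=
  ∑ g with (ρ g).val *ᵥ v = w, (ρ g).val.map C *ᵥ X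

open scoped Classical in
theorem card_filter_mulVec_eq (g₀ : G) :
    (Finset.univ.filter fun g => (ρ g).val *ᵥ v = (ρ g₀).val *ᵥ v).card =
      Nat.card {g : G // (ρ g).val *ᵥ v = v} := by
  rw [← Fintype.card_subtype, ← Nat.card_eq_fintype_card]
  refine (Nat.card_congr (Equiv.subtypeEquiv (Equiv.mulLeft g₀) fun g => ?_)).symm
  rw [Equiv.coe_mulLeft, map_mul, Units.val_mul, ← mulVec_mulVec,
    (mulVec_injective_iff_isUnit.2 (ρ g₀).isUnit).eq_iff]

theorem eval_comp_cosetSum (g₀ : G) :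
    eval v ∘ cosetSum ρ v ((ρ g₀).val *ᵥ v) =
      (Nat.card {g : G // (ρ g).val *ᵥ v = v} : k) • ((ρ g₀).val *ᵥ v) := by
  classical
  rw [cosetSum, RingHom.comp_finset_sum, ← card_filter_mulVec_eq, Nat.cast_smul_eq_nsmul,
    ← Finset.sum_const]
  refine Finset.sum_congr rfl fun g hg => ?_
  rw [eval_comp_map_C_mulVec_X, (Finset.mem_filter.1 hg).2]

theorem span_cosetSum_eq_top
    (hv : Submodule.span k (Set.range fun g : G => (ρ g).val *ᵥ v) = ⊤)
    (hH : (Nat.card {g : G // (ρ g).val *ᵥ v = v} : k) ≠ 0) :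
    Submodule.span (FractionRing (MvPolynomial (Fin d) k))
      (Set.range fun g => algebraMap _ (FractionRing (MvPolynomial (Fin d) k)) ∘
        cosetSum ρ v ((ρ g).val *ᵥ v)) = ⊤ := by
  refine span_range_algebraMap_comp_eq_top (eval v) ?_
  simp only [eval_comp_cosetSum, Set.range_smul, Submodule.span_smul_eq_of_isUnit _ _ hH.isUnit,
    hv]

theorem mulVec_cosetSum
    (hv : Submodule.span k (Set.range fun g : G => (ρ g).val *ᵥ v) = ⊤) (π : Equiv.Perm G)
    {A : Matrix (Fin d) (Fin d) (FractionRing (MvPolynomial (Fin d) k))}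
    (hA : ∀ g : G, A *ᵥ (((ρ g).val.map (toFunField k d)) *ᵥ Xvec k d) =
      ((ρ (π g)).val.map (toFunField k d)) *ᵥ Xvec k d)
    {B : Matrix (Fin d) (Fin d) k} (hB : EvalAt v A B) (w : Fin d → k) :
    A *ᵥ (algebraMap _ _ ∘ cosetSum ρ v w) = algebraMap _ _ ∘ cosetSum ρ v (B *ᵥ w) := by
  classical
  have hBρ : ∀ g, B *ᵥ ((ρ g).val *ᵥ v) = (ρ (π g)).val *ᵥ v := fun g =>
    hB.mulVec_of_mulVec_Xvec (hA g)
  have hBinj : Function.Injective B.mulVec := mulVec_injective_iff_isUnit.2 <|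
    isUnit_of_forall_mem_range_mulVec hv fun g => ⟨_, (hBρ (π.symm g)).trans (by simp)⟩
  simp only [map_toFunField_mulVec_Xvec] at hA
  rw [cosetSum, cosetSum, RingHom.comp_finset_sum, RingHom.comp_finset_sum, mulVec_sum]
  simp only [hA]
  exact Finset.sum_filter_comp_of_semiconj (o := fun g => (ρ g).val *ᵥ v) hBinj
    (fun g => (hBρ g).symm) (fun g => algebraMap _ (FractionRing (MvPolynomial (Fin d) k)) ∘
      ((ρ g).val.map C *ᵥ X)) w

end CosetSum

theorem eval_at_generator_injective_general
    {k G : Type*} [Field k] [Group G] [Finite G] (d : ℕ)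
    (ρ : G →* GL (Fin d) k) (v : Fin d → k)
    (hv : Submodule.span k (Set.range fun g : G => (ρ g).val.mulVec v) = ⊤)
    (hH : (Nat.card {g : G // (ρ g).val.mulVec v = v} : k) ≠ 0)
    (π π' : Equiv.Perm G)
    (A A' : GL (Fin d) (FractionRing (MvPolynomial (Fin d) k)))
    (hA : ∀ g : G, A.val.mulVec (((ρ g).val.map (toFunField k d)).mulVec (Xvec k d)) =
      ((ρ (π g)).val.map (toFunField k d)).mulVec (Xvec k d))
    (hA' : ∀ g : G, A'.val.mulVec (((ρ g).val.map (toFunField k d)).mulVec (Xvec k d)) =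
      ((ρ (π' g)).val.map (toFunField k d)).mulVec (Xvec k d))
    (B : Matrix (Fin d) (Fin d) k)
    (hB : EvalAt v A.val B) (hB' : EvalAt v A'.val B) :
    A = A' := by
  cases nonempty_fintype G
  refine Units.ext <| Matrix.toLin'.injective <|
    LinearMap.ext_on_range (span_cosetSum_eq_top ρ v hv hH) fun g => ?_
  rw [Matrix.toLin'_apply, Matrix.toLin'_apply, mulVec_cosetSum ρ v hv π hA hB,
    mulVec_cosetSum ρ v hv π' hA' hB']

/-- If `v` is a generator whose stabilizer's order is invertible in `k`,
then evaluation at `v` is injective on `GL(GX)`: two matrices over `k(X)` realizing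
permutations on the orbit of the indeterminate vector `X` with the same evaluation at
`v` are equal. -/
theorem eval_at_generator_injective
    {k G : Type*} [Field k] [Infinite k] [Group G] [Finite G] (d : ℕ)
    (ρ : G →* GL (Fin d) k) (v : Fin d → k)
    (hv : Submodule.span k (Set.range fun g : G => (ρ g).val.mulVec v) = ⊤)
    (hH : (Nat.card {g : G // (ρ g).val.mulVec v = v} : k) ≠ 0)
    (π π' : Equiv.Perm G)
    (A A' : GL (Fin d) (FractionRing (MvPolynomial (Fin d) k)))
    (hA : ∀ g : G, A.val.mulVec (((ρ g).val.map (toFunField k d)).mulVec (Xvec k d)) =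
      ((ρ (π g)).val.map (toFunField k d)).mulVec (Xvec k d))
    (hA' : ∀ g : G, A'.val.mulVec (((ρ g).val.map (toFunField k d)).mulVec (Xvec k d)) =
      ((ρ (π' g)).val.map (toFunField k d)).mulVec (Xvec k d))
    (B : Matrix (Fin d) (Fin d) k)
    (hB : EvalAt v A.val B) (hB' : EvalAt v A'.val B) :
    A = A' :=
  eval_at_generator_injective_general d ρ v hv hH π π' A A' hA hA' B hB hB'
end

section
/- If the annihilator Ann(v) of a generator v of the cyclic kG-module V is a two-sided ideal of kG, then Sym(G,w) = Sym(G,v) for every generator w ∈ Gen(V), and every generator of V is a generic point. -/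
/-!
Write `a • u` for `ρ.asAlgebraHom a u`. Since `v` generates `V`, every `u` is `b • v`, so a
right ideal `Ann(v)` kills all of `V`: `Ann(v) = Ann(V) ⊆ Ann(w)` for every `w`. If `w` is a
generator too, `kG / Ann(v) ≃ V ≃ kG / Ann(w)` and `kG` is finite-dimensional, so
`Ann(w) = Ann(v)`. Hence `a • v ↦ a • w` is a well-defined linear automorphism of `V`
carrying the orbit of `v` onto that of `w`, which transports orbit symmetries; and
`g • w = w` puts `g - 1` in `Ann(w) = Ann(V)`, so `g` acts trivially.
-/

theorem LinearMap.ker_eq_of_ker_le_of_surjective {K M N : Type*} [DivisionRing K]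
    [AddCommGroup M] [Module K M] [FiniteDimensional K M] [AddCommGroup N] [Module K N]
    {f g : M →ₗ[K] N} (hf : Function.Surjective f) (hg : Function.Surjective g)
    (h : ker f ≤ ker g) : ker f = ker g := by
  refine Submodule.eq_of_le_of_finrank_eq h ?_
  have hrf := f.finrank_range_add_finrank_ker
  have hrg := g.finrank_range_add_finrank_ker
  rw [range_eq_top.mpr hf, finrank_top] at hrf
  rw [range_eq_top.mpr hg, finrank_top] at hrg
  omega

theorem LinearMap.exists_linearEquiv_comp_eq_of_ker_eq {R M N : Type*} [Ring R]
    [AddCommGroup M] [Module R M] [AddCommGroup N] [Module R N]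
    {f g : M →ₗ[R] N} (hf : Function.Surjective f) (hg : Function.Surjective g)
    (h : ker f = ker g) : ∃ e : N ≃ₗ[R] N, e.toLinearMap ∘ₗ f = g :=
  ⟨(f.quotKerEquivOfSurjective hf).symm ≪≫ₗ Submodule.quotEquivOfEq _ _ h ≪≫ₗ
    g.quotKerEquivOfSurjective hg, by ext; simp⟩

theorem exists_linearEquiv_permute_iff {R V ι : Type*} [Semiring R] [AddCommMonoid V]
    [Module R V] {x y : ι → V} (e : V ≃ₗ[R] V) (he : ∀ i, e (x i) = y i) (π : ι → ι) :
    (∃ A : V ≃ₗ[R] V, ∀ i, A (y i) = y (π i)) ↔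
      (∃ A : V ≃ₗ[R] V, ∀ i, A (x i) = x (π i)) := by
  have he' : ∀ i, e.symm (y i) = x i := fun i => e.symm_apply_eq.mpr (he i).symm
  constructor
  · rintro ⟨A, hA⟩
    exact ⟨e ≪≫ₗ A ≪≫ₗ e.symm, fun i => by simp [he, hA, he']⟩
  · rintro ⟨A, hA⟩
    exact ⟨e.symm ≪≫ₗ A ≪≫ₗ e, fun i => by simp [he, hA, he']⟩

namespace Representation

section

variable {k G V : Type*} [CommSemiring k] [Monoid G] [AddCommMonoid V] [Module k V]

noncomputable def evalAt (ρ : Representation k G V) (u : V) : MonoidAlgebra k G →ₗ[k] V :=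
  (LinearMap.applyₗ u).comp ρ.asAlgebraHom.toLinearMap

@[simp]
theorem evalAt_apply (ρ : Representation k G V) (u : V) (a : MonoidAlgebra k G) :
    ρ.evalAt u a = ρ.asAlgebraHom a u := rfl

theorem evalAt_surjective {ρ : Representation k G V} {u : V}
    (hu : Submodule.span k (Set.range fun g : G => ρ g u) = ⊤) :
    Function.Surjective (ρ.evalAt u) := by
  rw [← LinearMap.range_eq_top, eq_top_iff, ← hu, Submodule.span_le]
  rintro _ ⟨g, rfl⟩
  exact ⟨MonoidAlgebra.single g 1, by simp⟩

theorem asAlgebraHom_eq_zero_of_apply_generator_eq_zero {ρ : Representation k G V} {v : V}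
    (hv : Submodule.span k (Set.range fun g : G => ρ g v) = ⊤)
    (htwosided : ∀ a b : MonoidAlgebra k G, ρ.asAlgebraHom a v = 0 →
      ρ.asAlgebraHom (a * b) v = 0)
    {a : MonoidAlgebra k G} (ha : ρ.asAlgebraHom a v = 0) : ρ.asAlgebraHom a = 0 := by
  ext u
  obtain ⟨b, rfl⟩ := evalAt_surjective hv u
  simpa using htwosided a b ha

end

theorem ker_evalAt_eq_of_span_eq_top {k G V : Type*} [Field k] [Monoid G] [Finite G]
    [AddCommGroup V] [Module k V] {ρ : Representation k G V} {v w : V}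
    (hv : Submodule.span k (Set.range fun g : G => ρ g v) = ⊤)
    (hw : Submodule.span k (Set.range fun g : G => ρ g w) = ⊤)
    (htwosided : ∀ a b : MonoidAlgebra k G, ρ.asAlgebraHom a v = 0 →
      ρ.asAlgebraHom (a * b) v = 0) :
    LinearMap.ker (ρ.evalAt w) = LinearMap.ker (ρ.evalAt v) := by
  have := Fintype.ofFinite G
  refine (LinearMap.ker_eq_of_ker_le_of_surjective (evalAt_surjective hv)
    (evalAt_surjective hw) fun a ha => ?_).symm
  simp [asAlgebraHom_eq_zero_of_apply_generator_eq_zero hv htwosided ha]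

end Representation

theorem twosided_annihilator_all_generators_generic_general
    {k G V : Type*} [Field k] [Group G] [Finite G]
    [AddCommGroup V] [Module k V]
    (ρ : Representation k G V) (v : V)
    (hv : Submodule.span k (Set.range fun g : G => ρ g v) = ⊤)
    (htwosided : ∀ a b : MonoidAlgebra k G, ρ.asAlgebraHom a v = 0 →
      ρ.asAlgebraHom (a * b) v = 0) :
    (∀ w : V, Submodule.span k (Set.range fun g : G => ρ g w) = ⊤ →
      ∀ π : Equiv.Perm G,
        ((∃ A : V ≃ₗ[k] V, ∀ g : G, A (ρ g w) = ρ (π g) w) ↔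
          (∃ A : V ≃ₗ[k] V, ∀ g : G, A (ρ g v) = ρ (π g) v))) ∧
    (∀ w : V, Submodule.span k (Set.range fun g : G => ρ g w) = ⊤ →
      ∀ g : G, ρ g w = w → ∀ u : V, ρ g u = u) := by
  refine ⟨fun w hw π => ?_, fun w hw g hg u => ?_⟩
  · obtain ⟨e, he⟩ := LinearMap.exists_linearEquiv_comp_eq_of_ker_eq
      (Representation.evalAt_surjective hv) (Representation.evalAt_surjective hw)
      (Representation.ker_evalAt_eq_of_span_eq_top hv hw htwosided).symm
    refine exists_linearEquiv_permute_iff e (fun g => ?_) π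
    simpa using LinearMap.congr_fun he (MonoidAlgebra.single g 1)
  · have hfix : MonoidAlgebra.single g 1 - 1 ∈ LinearMap.ker (ρ.evalAt w) := by simp [hg]
    rw [Representation.ker_evalAt_eq_of_span_eq_top hv hw htwosided] at hfix
    have hρg :=
      Representation.asAlgebraHom_eq_zero_of_apply_generator_eq_zero hv htwosided hfix
    simpa [sub_eq_zero] using LinearMap.congr_fun hρg u

/-- If the annihilator of a generator `v` of the cyclic `kG`-module `V`
is a two-sided ideal of `kG`, then `Sym(G,w) = Sym(G,v)` for every generator `w`, and
every generator is a generic point (its stabilizer equals the kernel of the action). -/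
theorem twosided_annihilator_all_generators_generic
    {k G V : Type*} [Field k] [Infinite k] [Group G] [Finite G]
    [AddCommGroup V] [Module k V]
    (ρ : Representation k G V) (v : V)
    (hv : Submodule.span k (Set.range fun g : G => ρ g v) = ⊤)
    (htwosided : ∀ a b : MonoidAlgebra k G, ρ.asAlgebraHom a v = 0 →
      ρ.asAlgebraHom (a * b) v = 0) :
    (∀ w : V, Submodule.span k (Set.range fun g : G => ρ g w) = ⊤ →
      ∀ π : Equiv.Perm G,
        ((∃ A : V ≃ₗ[k] V, ∀ g : G, A (ρ g w) = ρ (π g) w) ↔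
          (∃ A : V ≃ₗ[k] V, ∀ g : G, A (ρ g v) = ρ (π g) v))) ∧
    (∀ w : V, Submodule.span k (Set.range fun g : G => ρ g w) = ⊤ →
      ∀ g : G, ρ g w = w → ∀ u : V, ρ g u = u) :=
  twosided_annihilator_all_generators_generic_general ρ v hv htwosided
end

section
/- Let χ be an ideal character of G (afforded by a two-sided ideal I of CG). A permutation π of G is a generic symmetry of χ if and only if χ(π(g)^{-1}π(h)) = χ(g^{-1}h) for all g, h ∈ G; moreover, for every generic symmetry π, χ̂(π) = (1/|G|) Σ_{g ∈ G} χ(g^{-1}π(g)). -/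
/-!
Identify `ℂG` with `EuclideanSpace ℂ G` and let `N` be the annihilator of `v`. Since `N` is a
two-sided ideal it annihilates every cyclic vector `w`, and a dimension count shows it is exactly
the annihilator of `w`; so `g ↦ ρ g w` identifies `V` with `ℂG ⧸ N` for every such `w`, and `π` is
a generic symmetry iff the permutation operator `P_π` preserves `N`.

Let `p` be the orthogonal projection onto `Nᗮ`. It commutes with right translations, and computing
`χ(h)` as the trace of left translation by `h` on `ℂG ⧸ N ≅ Nᗮ` gives its matrix entries
`p_{a,b} = χ(a⁻¹b) / |G|`. As `P_π` is unitary, it preserves `N` iff it commutes with `p`, i.e. iff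
these entries are `π`-invariant; and in the same way `χ̂(π) = tr (P_π p) = ∑_b p_{π⁻¹ b, b}`.
-/

open LinearMap Submodule

section Projection

variable {𝕜 E V : Type*} [RCLike 𝕜] [NormedAddCommGroup E] [InnerProductSpace 𝕜 E]
  [FiniteDimensional 𝕜 E] [AddCommGroup V] [Module 𝕜 V]

theorem exists_rightInverse_comp_eq_starProjection (T : E →ₗ[𝕜] V)
    (hT : Function.Surjective T) :
    ∃ J : V →ₗ[𝕜] E, T ∘ₗ J = LinearMap.id ∧ J ∘ₗ T = (ker T)ᗮ.starProjection.toLinearMap := by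
  set K := ker T
  have hK := K.isCompl_orthogonal
  let J : V →ₗ[𝕜] E := Kᗮ.subtype ∘ₗ (quotientEquivOfIsCompl K Kᗮ hK).toLinearMap ∘ₗ
    (T.quotKerEquivOfSurjective hT).symm.toLinearMap
  have hJT (c : E) : c - J (T c) ∈ K := by
    rw [← Submodule.Quotient.eq]
    simp only [J, comp_apply, LinearEquiv.coe_coe, quotKerEquivOfSurjective_symm_apply,
      subtype_apply]
    rw [← quotientEquivOfIsCompl_symm_apply K Kᗮ hK, LinearEquiv.symm_apply_apply]
  refine ⟨J, LinearMap.ext fun y => ?_, LinearMap.ext fun c => ?_⟩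
  · obtain ⟨c, rfl⟩ := hT y
    rw [comp_apply, id_apply, ← sub_eq_zero, ← map_sub, ← neg_sub, map_neg, neg_eq_zero]
    exact mem_ker.mp (hJT c)
  · exact (eq_starProjection_of_mem_orthogonal (by simp [J])
      (Submodule.le_orthogonal_orthogonal _ (hJT c))).symm

theorem trace_eq_trace_comp_starProjection [FiniteDimensional 𝕜 V] {T : E →ₗ[𝕜] V}
    (hT : Function.Surjective T) {B : V →ₗ[𝕜] V} {L : E →ₗ[𝕜] E} (h : B ∘ₗ T = T ∘ₗ L) :
    trace 𝕜 V B = trace 𝕜 E (L ∘ₗ (ker T)ᗮ.starProjection.toLinearMap) := by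
  obtain ⟨J, hTJ, hJT⟩ := exists_rightInverse_comp_eq_starProjection T hT
  calc trace 𝕜 V B = trace 𝕜 V (B ∘ₗ T ∘ₗ J) := by rw [hTJ, comp_id]
    _ = trace 𝕜 V (T ∘ₗ L ∘ₗ J) := by rw [← comp_assoc, h, comp_assoc]
    _ = trace 𝕜 E ((L ∘ₗ J) ∘ₗ T) := trace_comp_comm' _ _
    _ = trace 𝕜 E (L ∘ₗ (ker T)ᗮ.starProjection.toLinearMap) := by rw [comp_assoc, hJT]

theorem map_eq_self_iff_commute_starProjection_orthogonal (K : Submodule 𝕜 E) (f : E ≃ₗᵢ[𝕜] E) :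
    K.map f.toLinearEquiv.toLinearMap = K ↔
      ∀ x, Kᗮ.starProjection (f x) = f (Kᗮ.starProjection x) := by
  constructor
  · intro hK x
    have hKo : Kᗮ.map f.toLinearEquiv.toLinearMap = Kᗮ := by rw [map_orthogonal_equiv, hK]
    have := starProjection_map_apply f Kᗮ (f x)
    simpa only [hKo, f.symm_apply_apply] using this
  · intro hcomm
    have hK (x : E) : x ∈ K ↔ Kᗮ.starProjection x = 0 := by
      rw [starProjection_apply_eq_zero_iff, orthogonal_orthogonal]
    refine eq_of_le_of_finrank_eq ?_ (LinearEquiv.finrank_map_eq _ _)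
    rintro _ ⟨x, hx, rfl⟩
    rw [SetLike.mem_coe, hK] at hx
    simp [hK, hcomm, hx]

end Projection

section Quotient

variable {R E V : Type*} [Ring R] [AddCommGroup E] [Module R E] [AddCommGroup V] [Module R V]

theorem exists_linearEquiv_comp_eq_of_map_ker_eq {T : E →ₗ[R] V} (hT : Function.Surjective T)
    (L : E ≃ₗ[R] E) (hL : (ker T).map L.toLinearMap = ker T) :
    ∃ A : V ≃ₗ[R] V, A.toLinearMap ∘ₗ T = T ∘ₗ L.toLinearMap := by
  let e := T.quotKerEquivOfSurjective hT
  refine ⟨e.symm.trans ((Quotient.equiv _ _ L hL).trans e), LinearMap.ext fun x => ?_⟩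
  simp [e]

end Quotient

section EuclideanSpace

variable {𝕜 ι : Type*} [RCLike 𝕜] [Fintype ι] [DecidableEq ι]

theorem commute_piLpCongrLeft_iff (M : EuclideanSpace 𝕜 ι →ₗ[𝕜] EuclideanSpace 𝕜 ι)
    (σ : Equiv.Perm ι) :
    (∀ x, M (LinearIsometryEquiv.piLpCongrLeft 2 𝕜 𝕜 σ x) =
        LinearIsometryEquiv.piLpCongrLeft 2 𝕜 𝕜 σ (M x)) ↔
      ∀ i j, M (EuclideanSpace.single (σ j) 1) (σ i) = M (EuclideanSpace.single j 1) i := by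
  constructor
  · intro h i j
    have hj := h (EuclideanSpace.single j 1)
    rw [EuclideanSpace.piLpCongrLeft_single] at hj
    simp [hj, Equiv.piCongrLeft'_apply]
  · intro h
    have hcomp : M ∘ₗ (LinearIsometryEquiv.piLpCongrLeft 2 𝕜 𝕜 σ).toLinearEquiv.toLinearMap =
        (LinearIsometryEquiv.piLpCongrLeft 2 𝕜 𝕜 σ).toLinearEquiv.toLinearMap ∘ₗ M := by
      refine (EuclideanSpace.basisFun ι 𝕜).toBasis.ext fun j => ?_
      ext i
      simpa [Equiv.piCongrLeft'_apply] using h (σ.symm i) j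
    exact LinearMap.congr_fun hcomp

end EuclideanSpace

namespace Representation

variable {𝕜 G V : Type*} [RCLike 𝕜] [Group G] [AddCommGroup V] [Module 𝕜 V]
  (ρ : Representation 𝕜 G V)

def IsCyclicVector (w : V) : Prop :=
  span 𝕜 (Set.range fun g => ρ g w) = ⊤

def HasTwoSidedAnnihilator (v : V) : Prop :=
  ∀ a b : MonoidAlgebra 𝕜 G, ρ.asAlgebraHom a v = 0 → ρ.asAlgebraHom (a * b) v = 0

/-- `π ∈ Sym(G, χ)` in the notation of the paper. -/
def IsGenericSymmetry (π : Equiv.Perm G) : Prop :=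
  ∀ w : V, ρ.IsCyclicVector w → ∃ A : V ≃ₗ[𝕜] V, ∀ g, A (ρ g w) = ρ (π g) w

theorem asAlgebraHom_eq_zero_of_apply_eq_zero {v : V} (hv : ρ.IsCyclicVector v)
    (hann : ρ.HasTwoSidedAnnihilator v) {a : MonoidAlgebra 𝕜 G} (ha : ρ.asAlgebraHom a v = 0) :
    ρ.asAlgebraHom a = 0 := by
  have hspan : span 𝕜 (Set.range fun g => ρ g v) ≤ ker (ρ.asAlgebraHom a) := by
    refine span_le.mpr ?_
    rintro _ ⟨g, rfl⟩
    simpa using hann a (MonoidAlgebra.single g 1) ha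
  rw [hv, top_le_iff, ker_eq_top] at hspan
  exact hspan

variable [Fintype G]

def orbitMap (w : V) : EuclideanSpace 𝕜 G →ₗ[𝕜] V :=
  Fintype.linearCombination 𝕜 (fun g => ρ g w) ∘ₗ (WithLp.linearEquiv 2 𝕜 (G → 𝕜)).toLinearMap

theorem orbitMap_apply (w : V) (c : EuclideanSpace 𝕜 G) :
    ρ.orbitMap w c = ∑ g, c g • ρ g w := by
  simp [orbitMap, Fintype.linearCombination_apply]

theorem orbitMap_single [DecidableEq G] (w : V) (g : G) :
    ρ.orbitMap w (EuclideanSpace.single g 1) = ρ g w := by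
  simp [orbitMap_apply]

theorem surjective_orbitMap {w : V} (hw : ρ.IsCyclicVector w) :
    Function.Surjective (ρ.orbitMap w) := by
  rw [← range_eq_top, orbitMap, range_comp, LinearEquiv.range, Submodule.map_top,
    Fintype.range_linearCombination]
  exact hw

theorem comp_orbitMap_eq {w : V} {A : V →ₗ[𝕜] V} {σ : Equiv.Perm G}
    (hA : ∀ g, A (ρ g w) = ρ (σ g) w) :
    A ∘ₗ ρ.orbitMap w =
      ρ.orbitMap w ∘ₗ (LinearIsometryEquiv.piLpCongrLeft 2 𝕜 𝕜 σ).toLinearEquiv.toLinearMap := by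
  classical
  refine (EuclideanSpace.basisFun G 𝕜).toBasis.ext fun g => ?_
  simp [orbitMap_single, hA]

theorem orbitMap_comp_mulRight (w : V) (s : G) :
    ρ.orbitMap w ∘ₗ
      (LinearIsometryEquiv.piLpCongrLeft 2 𝕜 𝕜 (Equiv.mulRight s)).toLinearEquiv.toLinearMap =
      ρ.orbitMap (ρ s w) := by
  classical
  refine (EuclideanSpace.basisFun G 𝕜).toBasis.ext fun g => ?_
  simp [orbitMap_single]

theorem orbitMap_apply_eq_asAlgebraHom (w : V) (c : EuclideanSpace 𝕜 G) :
    ρ.orbitMap w c = ρ.asAlgebraHom (∑ g, MonoidAlgebra.single g (c g)) w := by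
  simp [orbitMap_apply, map_sum, LinearMap.sum_apply]

theorem ker_orbitMap_le {v : V} (hv : ρ.IsCyclicVector v) (hann : ρ.HasTwoSidedAnnihilator v)
    (w : V) : ker (ρ.orbitMap v) ≤ ker (ρ.orbitMap w) := by
  intro c hc
  rw [mem_ker, orbitMap_apply_eq_asAlgebraHom] at hc ⊢
  rw [ρ.asAlgebraHom_eq_zero_of_apply_eq_zero hv hann hc, LinearMap.zero_apply]

theorem ker_orbitMap_eq {v w : V} (hv : ρ.IsCyclicVector v) (hann : ρ.HasTwoSidedAnnihilator v)
    (hw : ρ.IsCyclicVector w) : ker (ρ.orbitMap w) = ker (ρ.orbitMap v) := by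
  have hrank (u : V) (hu : ρ.IsCyclicVector u) :
      Module.finrank 𝕜 (ker (ρ.orbitMap u)) + Module.finrank 𝕜 V = Fintype.card G := by
    have := finrank_range_add_finrank_ker (ρ.orbitMap u)
    rw [range_eq_top.mpr (ρ.surjective_orbitMap hu), finrank_top, finrank_euclideanSpace] at this
    omega
  refine (eq_of_le_of_finrank_eq (ρ.ker_orbitMap_le hv hann w) ?_).symm
  linarith [hrank v hv, hrank w hw]

theorem map_ker_orbitMap_mulRight {v : V} (hv : ρ.IsCyclicVector v)
    (hann : ρ.HasTwoSidedAnnihilator v) (s : G) :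
    (ker (ρ.orbitMap v)).map
      (LinearIsometryEquiv.piLpCongrLeft 2 𝕜 𝕜 (Equiv.mulRight s)).toLinearEquiv.toLinearMap =
      ker (ρ.orbitMap v) := by
  refine eq_of_le_of_finrank_eq ?_ (LinearEquiv.finrank_map_eq _ _)
  rintro _ ⟨c, hc, rfl⟩
  rw [mem_ker, ← comp_apply, orbitMap_comp_mulRight]
  exact ρ.ker_orbitMap_le hv hann _ hc

/-- On `ℂG` this is right multiplication by the central idempotent `e` of the ideal character. -/
noncomputable def orbitProj (v : V) : EuclideanSpace 𝕜 G →L[𝕜] EuclideanSpace 𝕜 G :=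
  (ker (ρ.orbitMap v))ᗮ.starProjection

theorem orbitProj_mulRight {v : V} (hv : ρ.IsCyclicVector v) (hann : ρ.HasTwoSidedAnnihilator v)
    (s : G) (x : EuclideanSpace 𝕜 G) :
    ρ.orbitProj v (LinearIsometryEquiv.piLpCongrLeft 2 𝕜 𝕜 (Equiv.mulRight s) x) =
      LinearIsometryEquiv.piLpCongrLeft 2 𝕜 𝕜 (Equiv.mulRight s) (ρ.orbitProj v x) :=
  (map_eq_self_iff_commute_starProjection_orthogonal _ _).mp
    (ρ.map_ker_orbitMap_mulRight hv hann s) x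

theorem orbitProj_single_apply [DecidableEq G] {v : V} (hv : ρ.IsCyclicVector v)
    (hann : ρ.HasTwoSidedAnnihilator v) (a b : G) :
    ρ.orbitProj v (EuclideanSpace.single b 1) a =
      ρ.orbitProj v (EuclideanSpace.single 1 1) (a * b⁻¹) := by
  have h := ρ.orbitProj_mulRight hv hann b (EuclideanSpace.single 1 1)
  simp only [EuclideanSpace.piLpCongrLeft_single, Equiv.coe_mulRight, one_mul] at h
  rw [h]
  simp [Equiv.piCongrLeft'_apply]

theorem isGenericSymmetry_iff_map_ker_orbitMap_eq {v : V} (hv : ρ.IsCyclicVector v)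
    (hann : ρ.HasTwoSidedAnnihilator v) (π : Equiv.Perm G) :
    ρ.IsGenericSymmetry π ↔
      (ker (ρ.orbitMap v)).map
        (LinearIsometryEquiv.piLpCongrLeft 2 𝕜 𝕜 π).toLinearEquiv.toLinearMap =
          ker (ρ.orbitMap v) := by
  classical
  constructor
  · intro hπ
    obtain ⟨A, hA⟩ := hπ v hv
    refine eq_of_le_of_finrank_eq ?_ (LinearEquiv.finrank_map_eq _ _)
    rintro _ ⟨c, hc, rfl⟩
    have h := LinearMap.congr_fun (ρ.comp_orbitMap_eq (A := A.toLinearMap) hA) c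
    rw [comp_apply, comp_apply, mem_ker.mp hc, map_zero] at h
    exact h.symm
  · intro hmap w hw
    obtain ⟨A, hA⟩ := exists_linearEquiv_comp_eq_of_map_ker_eq (ρ.surjective_orbitMap hw)
      (LinearIsometryEquiv.piLpCongrLeft 2 𝕜 𝕜 π).toLinearEquiv
      (by rwa [ρ.ker_orbitMap_eq hv hann hw])
    refine ⟨A, fun g => ?_⟩
    simpa [orbitMap_single] using LinearMap.congr_fun hA (EuclideanSpace.single g 1)

variable [FiniteDimensional 𝕜 V]

theorem trace_eq_sum_orbitProj [DecidableEq G] {v w : V} (hv : ρ.IsCyclicVector v)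
    (hann : ρ.HasTwoSidedAnnihilator v) (hw : ρ.IsCyclicVector w) {A : V →ₗ[𝕜] V}
    {σ : Equiv.Perm G} (hA : ∀ g, A (ρ g w) = ρ (σ g) w) :
    trace 𝕜 V A = ∑ b, ρ.orbitProj v (EuclideanSpace.single b 1) (σ.symm b) := by
  rw [trace_eq_trace_comp_starProjection (ρ.surjective_orbitMap hw) (ρ.comp_orbitMap_eq hA),
    ρ.ker_orbitMap_eq hv hann hw, trace_eq_sum_inner _ (EuclideanSpace.basisFun G 𝕜)]
  refine Finset.sum_congr rfl fun b _ => ?_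
  simp only [EuclideanSpace.basisFun_apply, coe_comp, LinearEquiv.coe_coe,
    LinearIsometryEquiv.coe_toLinearEquiv, ContinuousLinearMap.coe_coe, Function.comp_apply,
    EuclideanSpace.inner_single_left, map_one, one_mul, LinearIsometryEquiv.piLpCongrLeft_apply,
    Equiv.piCongrLeft'_apply, orbitProj]

theorem card_mul_orbitProj_single_apply [DecidableEq G] {v : V} (hv : ρ.IsCyclicVector v)
    (hann : ρ.HasTwoSidedAnnihilator v) (a b : G) :
    (Fintype.card G : 𝕜) * ρ.orbitProj v (EuclideanSpace.single b 1) a =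
      trace 𝕜 V (ρ (a⁻¹ * b)) := by
  have htrace (h : G) :
      trace 𝕜 V (ρ h) = Fintype.card G * ρ.orbitProj v (EuclideanSpace.single 1 1) h⁻¹ := by
    rw [ρ.trace_eq_sum_orbitProj hv hann hv (σ := Equiv.mulLeft h) fun g => by simp]
    have hterm (b : G) : ρ.orbitProj v (EuclideanSpace.single b 1) ((Equiv.mulLeft h).symm b) =
        ρ.orbitProj v (EuclideanSpace.single 1 1) h⁻¹ := by
      rw [ρ.orbitProj_single_apply hv hann, Equiv.mulLeft_symm_apply, mul_inv_cancel_right]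
    simp only [hterm, Finset.sum_const, Finset.card_univ, nsmul_eq_mul]
  rw [ρ.orbitProj_single_apply hv hann, map_mul, trace_mul_comm, ← map_mul, htrace, mul_inv_rev,
    inv_inv]

theorem map_ker_orbitMap_eq_iff {v : V} (hv : ρ.IsCyclicVector v)
    (hann : ρ.HasTwoSidedAnnihilator v) (π : Equiv.Perm G) :
    (ker (ρ.orbitMap v)).map (LinearIsometryEquiv.piLpCongrLeft 2 𝕜 𝕜 π).toLinearEquiv.toLinearMap =
        ker (ρ.orbitMap v) ↔
      ∀ g h, trace 𝕜 V (ρ ((π g)⁻¹ * π h)) = trace 𝕜 V (ρ (g⁻¹ * h)) := by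
  classical
  refine (map_eq_self_iff_commute_starProjection_orthogonal _ _).trans
    ((commute_piLpCongrLeft_iff (ρ.orbitProj v).toLinearMap π).trans (forall₂_congr fun a b => ?_))
  rw [← ρ.card_mul_orbitProj_single_apply hv hann, ← ρ.card_mul_orbitProj_single_apply hv hann]
  exact (mul_right_inj' (Nat.cast_ne_zero.mpr Fintype.card_ne_zero)).symm

theorem trace_eq_inv_card_mul_sum {v w : V} (hv : ρ.IsCyclicVector v)
    (hann : ρ.HasTwoSidedAnnihilator v) (hw : ρ.IsCyclicVector w) {π : Equiv.Perm G}
    {A : V →ₗ[𝕜] V} (hA : ∀ g, A (ρ g w) = ρ (π g) w) :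
    trace 𝕜 V A = (Fintype.card G : 𝕜)⁻¹ * ∑ g, trace 𝕜 V (ρ (g⁻¹ * π g)) := by
  classical
  rw [ρ.trace_eq_sum_orbitProj hv hann hw hA, Finset.mul_sum, ← Equiv.sum_comp π]
  refine Finset.sum_congr rfl fun g _ => ?_
  rw [π.symm_apply_apply, ← ρ.card_mul_orbitProj_single_apply hv hann,
    inv_mul_cancel_left₀ (Nat.cast_ne_zero.mpr Fintype.card_ne_zero)]

end Representation

/-- Let `χ` be an ideal character of `G` (afforded by a cyclic module
whose generator has a two-sided annihilator, i.e. by a two-sided ideal of `ℂG`).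
A permutation `π` is a generic symmetry of `χ` iff
`χ(π(g)⁻¹π(h)) = χ(g⁻¹h)` for all `g, h`; moreover every generic symmetry satisfies
`χ̂(π) = (1/|G|) ∑_g χ(g⁻¹π(g))`. -/
theorem generic_sym_of_ideal_character
    {G : Type*} [Group G] [Fintype G]
    (V : Type*) [AddCommGroup V] [Module ℂ V] [FiniteDimensional ℂ V]
    (ρ : Representation ℂ G V) (v : V)
    (hv : Submodule.span ℂ (Set.range fun g : G => ρ g v) = ⊤)
    (hideal : ∀ a b : MonoidAlgebra ℂ G, ρ.asAlgebraHom a v = 0 →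
      ρ.asAlgebraHom (a * b) v = 0)
    (π : Equiv.Perm G) :
    ((∀ w : V, Submodule.span ℂ (Set.range fun g : G => ρ g w) = ⊤ →
        ∃ A : V ≃ₗ[ℂ] V, ∀ g : G, A (ρ g w) = ρ (π g) w) ↔
      (∀ g h : G, LinearMap.trace ℂ V (ρ ((π g)⁻¹ * π h)) =
        LinearMap.trace ℂ V (ρ (g⁻¹ * h)))) ∧
    ((∀ w : V, Submodule.span ℂ (Set.range fun g : G => ρ g w) = ⊤ →
        ∃ A : V ≃ₗ[ℂ] V, ∀ g : G, A (ρ g w) = ρ (π g) w) →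
      ∀ w : V, Submodule.span ℂ (Set.range fun g : G => ρ g w) = ⊤ →
        ∀ A : V ≃ₗ[ℂ] V, (∀ g : G, A (ρ g w) = ρ (π g) w) →
          LinearMap.trace ℂ V A.toLinearMap =
            (Fintype.card G : ℂ)⁻¹ * ∑ g : G, LinearMap.trace ℂ V (ρ (g⁻¹ * π g))) :=
  ⟨(ρ.isGenericSymmetry_iff_map_ker_orbitMap_eq hv hideal π).trans
      (ρ.map_ker_orbitMap_eq_iff hv hideal π),
    fun _ _ hw A hA => ρ.trace_eq_inv_card_mul_sum hv hideal hw (A := A.toLinearMap) hA⟩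
end
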